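/- The tensor product of a block-positive operator and a separable positive operator is block positive: if E is block positive on a multipartite space H (with respect to parties A_1,…,A_m) and F is separable on another multipartite space H' (with respect to the same m parties), then E ⊗ F is block positive on H ⊗ H' with respect to the m parties, where party A_k holds its factors from both H and H'. -/

import Mathlib

open Matrix BigOperators ComplexOrder

noncomputable section

/-- Tensor product of a family of local operators, one per party/step. -/
def tensorFam {m : ℕ} {ι : Fin m → Type*} [∀ k, Fintype (ι k)]
    (A : (k : Fin m) → Matrix (ι k) (ι k) ℂ) :
    Matrix ((k : Fin m) → ι k) ((k : Fin m) → ι k) ℂ :=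
  Matrix.of fun i j => ∏ k, A k (i k) (j k)

/-- Separable operator: a sum of tensor products of positive semidefinite local operators. -/
def IsSep {m : ℕ} {ι : Fin m → Type*} [∀ k, Fintype (ι k)]
    (E : Matrix ((k : Fin m) → ι k) ((k : Fin m) → ι k) ℂ) : Prop :=
  ∃ (S : Finset ℕ) (A : ℕ → (k : Fin m) → Matrix (ι k) (ι k) ℂ),
    (∀ s ∈ S, ∀ k, (A s k).PosSemidef) ∧ E = ∑ s ∈ S, tensorFam (A s)

/-- Separable state: separable with trace one. -/
def IsSepState {m : ℕ} {ι : Fin m → Type*} [∀ k, Fintype (ι k)]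
    (σ : Matrix ((k : Fin m) → ι k) ((k : Fin m) → ι k) ℂ) : Prop :=
  IsSep σ ∧ σ.trace = 1

/-- Block positive: nonnegative mean value on every separable state. -/
def IsBlockPos {m : ℕ} {ι : Fin m → Type*} [∀ k, Fintype (ι k)]
    (E : Matrix ((k : Fin m) → ι k) ((k : Fin m) → ι k) ℂ) : Prop :=
  ∀ σ, IsSepState σ → 0 ≤ ((E * σ).trace).re

def IsPOVM {α N : Type*} [Fintype α] [Fintype N] [DecidableEq N]
    (M : α → Matrix N N ℂ) : Prop :=
  (∀ i, (M i).PosSemidef) ∧ ∑ i, M i = 1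

/-- Average success probability of a guessing strategy. -/
def succProb {α N : Type*} [Fintype α] [Fintype N]
    (η : α → ℝ) (ρ M : α → Matrix N N ℂ) : ℝ :=
  ∑ i, η i * ((ρ i * M i).trace).re
/-- Tensor product A ⊗ B of operators on two m-party spaces, with indices grouped so
that party k holds its factors from both spaces. -/
def pairTensor {m : ℕ} {ι ι' : Fin m → Type*} [∀ k, Fintype (ι k)] [∀ k, Fintype (ι' k)]
    (A : Matrix ((k : Fin m) → ι k) ((k : Fin m) → ι k) ℂ)
    (B : Matrix ((k : Fin m) → ι' k) ((k : Fin m) → ι' k) ℂ) :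
    Matrix ((k : Fin m) → ι k × ι' k) ((k : Fin m) → ι k × ι' k) ℂ :=
  Matrix.of fun i j =>
    A (fun k => (i k).1) (fun k => (j k).1) * B (fun k => (i k).2) (fun k => (j k).2)

/-!
Write `F = ∑ₜ ⊗ₖ Bₜₖ` and a separable `σ = ∑ₛ ⊗ₖ Aₛₖ` on the joint space. Each term
`tr((E ⊗ ⊗ₖ Bₜₖ) (⊗ₖ Aₛₖ))` equals `tr(E (⊗ₖ Cₖ))` with `Cₖ = Tr₂(Aₛₖ (1 ⊗ Bₜₖ))`, and `Cₖ` is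
positive semidefinite: writing `Bₜₖ = ∑ v v*`, each piece contributes a compression `W* Aₛₖ W`.
Normalising every `Cₖ` by its trace makes `⊗ₖ Cₖ` a nonnegative multiple of a product state, on
which `E` has nonnegative mean value by block positivity.
-/

open scoped Kronecker

lemma Complex.re_mul_nonneg {p w : ℂ} (hp : 0 ≤ p) (hw : 0 ≤ w.re) : 0 ≤ (p * w).re := by
  obtain ⟨hp_re, hp_im⟩ := Complex.nonneg_iff.mp hp
  rw [Complex.mul_re, ← hp_im, zero_mul, sub_zero]
  exact mul_nonneg hp_re hw

lemma trace_submatrix_mul {R α n : Type*} [CommSemiring R] [Fintype α] [Fintype n]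
    (A : Matrix n n R) (B : Matrix α α R) (e : α ≃ n) :
    (A.submatrix e e * B).trace = (A * B.submatrix e.symm e.symm).trace := by
  simp only [trace, diag, mul_apply, submatrix_apply]
  rw [← e.sum_comp]
  exact Finset.sum_congr rfl fun i _ => Fintype.sum_equiv e _ _ fun j => by simp

section Contract

variable {R : Type*} [CommSemiring R] {α β : Type*} [Fintype β]

/-- The partial trace `Tr_β (A (1 ⊗ B))`. -/
def contract (A : Matrix (α × β) (α × β) R) (B : Matrix β β R) : Matrix α α R :=
  of fun x y => ∑ a, ∑ b, B a b * A (x, b) (y, a)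

lemma contract_sum {κ : Type*} (A : Matrix (α × β) (α × β) R) (s : Finset κ)
    (B : κ → Matrix β β R) : contract A (∑ c ∈ s, B c) = ∑ c ∈ s, contract A (B c) := by
  ext x y
  simp only [contract, of_apply, Matrix.sum_apply, Finset.sum_mul]
  rw [eq_comm, Finset.sum_comm]
  exact Finset.sum_congr rfl fun _ _ => Finset.sum_comm

lemma trace_kronecker_mul [Fintype α] (E : Matrix α α R) (F : Matrix β β R)
    (σ : Matrix (α × β) (α × β) R) : (E ⊗ₖ F * σ).trace = (E * contract σ F).trace := by
  simp only [trace, diag, mul_apply, kroneckerMap_apply, contract, of_apply,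
    Fintype.sum_prod_type, Finset.mul_sum]
  refine Finset.sum_congr rfl fun x _ => ?_
  rw [Finset.sum_comm]
  simp only [mul_assoc]

lemma contract_vecMulVec [StarRing R] [Fintype α] [DecidableEq α] (A : Matrix (α × β) (α × β) R)
    (v : β → R) :
    contract A (vecMulVec v (star v)) =
      (((1 : Matrix α α R) ⊗ₖ replicateCol Unit v)ᴴ * A *
        ((1 : Matrix α α R) ⊗ₖ replicateCol Unit v)).submatrix (·, ()) (·, ()) := by
  ext x y
  simp only [contract, vecMulVec_apply, Pi.star_apply, of_apply, submatrix_apply, mul_apply,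
    conjTranspose_apply, kroneckerMap_apply, one_apply, replicateCol_apply, ite_mul, one_mul,
    zero_mul, apply_ite (star : R → R), star_zero, Fintype.sum_prod_type, Finset.sum_ite_irrel,
    Finset.sum_const_zero, Finset.sum_ite_eq', Finset.mem_univ, ↓reduceIte, mul_ite, Finset.sum_mul,
    mul_zero]
  exact Finset.sum_congr rfl fun a _ => Finset.sum_congr rfl fun b _ => by ring

end Contract

lemma Matrix.PosSemidef.contract {𝕜 α β : Type*} [RCLike 𝕜] [Fintype α] [Fintype β]
    {A : Matrix (α × β) (α × β) 𝕜} {B : Matrix β β 𝕜} (hA : A.PosSemidef) (hB : B.PosSemidef) :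
    (contract A B).PosSemidef := by
  classical
  obtain ⟨n, v, rfl⟩ := posSemidef_iff_eq_sum_vecMulVec.mp hB
  rw [contract_sum]
  refine posSemidef_sum _ fun c _ => ?_
  rw [contract_vecMulVec]
  exact (hA.conjTranspose_mul_mul_same _).submatrix _

section MultiParty

variable {m : ℕ} {ι ι' : Fin m → Type*} [∀ k, Fintype (ι k)] [∀ k, Fintype (ι' k)]

lemma trace_tensorFam (A : (k : Fin m) → Matrix (ι k) (ι k) ℂ) :
    (tensorFam A).trace = ∏ k, (A k).trace := by
  simp only [trace, diag, tensorFam, of_apply, Fintype.prod_sum]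

lemma tensorFam_smul (c : Fin m → ℂ) (A : (k : Fin m) → Matrix (ι k) (ι k) ℂ) :
    tensorFam (fun k => c k • A k) = (∏ k, c k) • tensorFam A := by
  ext i j
  simp [tensorFam, Finset.prod_mul_distrib]

lemma tensorFam_eq_zero {A : (k : Fin m) → Matrix (ι k) (ι k) ℂ} {k : Fin m} (h : A k = 0) :
    tensorFam A = 0 := by
  ext i j
  exact Finset.prod_eq_zero (Finset.mem_univ k) (by simp [h])

lemma isSep_tensorFam {A : (k : Fin m) → Matrix (ι k) (ι k) ℂ} (hA : ∀ k, (A k).PosSemidef) :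
    IsSep (tensorFam A) :=
  ⟨{0}, fun _ => A, fun _ _ => hA, by simp⟩

lemma IsBlockPos.re_trace_mul_tensorFam_nonneg
    {E : Matrix ((k : Fin m) → ι k) ((k : Fin m) → ι k) ℂ} (hE : IsBlockPos E)
    {A : (k : Fin m) → Matrix (ι k) (ι k) ℂ} (hA : ∀ k, (A k).PosSemidef) :
    0 ≤ ((E * tensorFam A).trace).re := by
  by_cases hzero : ∃ k, (A k).trace = 0
  · obtain ⟨k, hk⟩ := hzero
    simp [tensorFam_eq_zero ((hA k).trace_eq_zero_iff.mp hk)]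
  push Not at hzero
  set c := fun k => (A k).trace
  have hstate : IsSepState (tensorFam fun k => (c k)⁻¹ • A k) :=
    ⟨isSep_tensorFam fun k => (hA k).smul (inv_nonneg.mpr (hA k).trace_nonneg),
      by simp [trace_tensorFam, c, hzero]⟩
  have hA_eq : A = fun k => c k • (c k)⁻¹ • A k := by
    funext k
    rw [smul_smul, mul_inv_cancel₀ (hzero k), one_smul]
  rw [hA_eq, tensorFam_smul, Matrix.mul_smul, trace_smul, smul_eq_mul]
  exact Complex.re_mul_nonneg (Finset.prod_nonneg fun k _ => (hA k).trace_nonneg)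
    (hE _ hstate)

lemma pairTensor_eq_submatrix_kronecker (E : Matrix ((k : Fin m) → ι k) ((k : Fin m) → ι k) ℂ)
    (F : Matrix ((k : Fin m) → ι' k) ((k : Fin m) → ι' k) ℂ) :
    pairTensor E F = (E ⊗ₖ F).submatrix (Equiv.arrowProdEquivProdArrow (Fin m) ι ι')
      (Equiv.arrowProdEquivProdArrow (Fin m) ι ι') :=
  rfl

lemma pairTensor_sum_right {κ : Type*} (E : Matrix ((k : Fin m) → ι k) ((k : Fin m) → ι k) ℂ)
    (s : Finset κ) (F : κ → Matrix ((k : Fin m) → ι' k) ((k : Fin m) → ι' k) ℂ) :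
    pairTensor E (∑ t ∈ s, F t) = ∑ t ∈ s, pairTensor E (F t) := by
  ext i j
  simp [pairTensor, Finset.mul_sum, Matrix.sum_apply]

lemma contract_submatrix_tensorFam (A : (k : Fin m) → Matrix (ι k × ι' k) (ι k × ι' k) ℂ)
    (B : (k : Fin m) → Matrix (ι' k) (ι' k) ℂ) :
    contract ((tensorFam A).submatrix (Equiv.arrowProdEquivProdArrow (Fin m) ι ι').symm
      (Equiv.arrowProdEquivProdArrow (Fin m) ι ι').symm) (tensorFam B) =
      tensorFam fun k => contract (A k) (B k) := by
  ext x y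
  simp only [contract, tensorFam, of_apply, submatrix_apply, Fintype.prod_sum,
    Finset.prod_mul_distrib, Equiv.arrowProdEquivProdArrow_symm_apply]

lemma trace_pairTensor_tensorFam_mul_tensorFam
    (E : Matrix ((k : Fin m) → ι k) ((k : Fin m) → ι k) ℂ)
    (B : (k : Fin m) → Matrix (ι' k) (ι' k) ℂ)
    (A : (k : Fin m) → Matrix (ι k × ι' k) (ι k × ι' k) ℂ) :
    (pairTensor E (tensorFam B) * tensorFam A).trace =
      (E * tensorFam fun k => contract (A k) (B k)).trace := by
  rw [pairTensor_eq_submatrix_kronecker, trace_submatrix_mul, trace_kronecker_mul,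
    contract_submatrix_tensorFam]

end MultiParty

theorem blockPos_tensor_sep_general {m : ℕ} {ι ι' : Fin m → Type*}
    [∀ k, Fintype (ι k)] [∀ k, Fintype (ι' k)]
    (E : Matrix ((k : Fin m) → ι k) ((k : Fin m) → ι k) ℂ)
    (F : Matrix ((k : Fin m) → ι' k) ((k : Fin m) → ι' k) ℂ)
    (hEbp : IsBlockPos E) (hF : IsSep F) :
    IsBlockPos (ι := fun k => ι k × ι' k) (pairTensor E F) := by
  obtain ⟨T, B, hB, rfl⟩ := hF
  rintro σ ⟨⟨S, A, hA, rfl⟩, -⟩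
  simp only [pairTensor_sum_right, Finset.sum_mul_sum, trace_sum, Complex.re_sum]
  refine Finset.sum_nonneg fun t ht => Finset.sum_nonneg fun s hs => ?_
  rw [trace_pairTensor_tensorFam_mul_tensorFam]
  exact hEbp.re_trace_mul_tensorFam_nonneg fun k => (hA s hs k).contract (hB t ht k)

/-- the tensor product of a block-positive operator and a separable
(positive) operator is block positive with respect to the m parties, where party k
holds its factors from both spaces. -/
theorem blockPos_tensor_sep {m : ℕ} {ι ι' : Fin m → Type*}
    [∀ k, Fintype (ι k)] [∀ k, Fintype (ι' k)]
    [∀ k, DecidableEq (ι k)] [∀ k, DecidableEq (ι' k)]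
    (E : Matrix ((k : Fin m) → ι k) ((k : Fin m) → ι k) ℂ)
    (F : Matrix ((k : Fin m) → ι' k) ((k : Fin m) → ι' k) ℂ)
    (hE : E.IsHermitian) (hEbp : IsBlockPos E) (hF : IsSep F) :
    IsBlockPos (ι := fun k => ι k × ι' k) (pairTensor E F) :=
  blockPos_tensor_sep_general E F hEbp hF
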